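/- Let K be a regular incidence complex of rank n ≥ 1 with flag-transitive automorphism subgroup Γ and distinguished generating subgroups R_{-1}, R_0, ..., R_n with respect to a base flag Φ. Then Γ = ⟨R_0, ..., R_{n-1}⟩. -/

import Mathlib

open Set Pointwise

/-- `Φ` is a flag of the subset `s` of the poset `α`: a chain contained in `s`
that is maximal among chains contained in `s`. -/
def IsFlagOf {α : Type*} [PartialOrder α] (s Φ : Set α) : Prop :=
  Φ ⊆ s ∧ IsChain (· ≤ ·) Φ ∧
    ∀ Ψ : Set α, Ψ ⊆ s → IsChain (· ≤ ·) Ψ → Φ ⊆ Ψ → Ψ = Φ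

/-- Two flags are adjacent if each differs from the other in exactly one face. -/
def FlagAdj {α : Type*} [PartialOrder α] (Φ Ψ : Set α) : Prop :=
  (Φ \ Ψ).ncard = 1 ∧ (Ψ \ Φ).ncard = 1

/-- The set `s` is flag-connected: any two flags of `s` are joined by a sequence
of successively adjacent flags of `s`. -/
def FlagConnIn {α : Type*} [PartialOrder α] (s : Set α) : Prop :=
  ∀ Φ Ψ : Set α, IsFlagOf s Φ → IsFlagOf s Ψ →
    Relation.ReflTransGen
      (fun A B => IsFlagOf s A ∧ IsFlagOf s B ∧ FlagAdj A B) Φ Ψ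

/-- The section between `F` and `G` is connected: any two of its proper faces are
joined by a finite sequence of successively incident proper faces of the section. -/
def ConnIn {α : Type*} [PartialOrder α] (F G : α) : Prop :=
  ∀ H K : α, F < H → H < G → F < K → K < G →
    Relation.ReflTransGen
      (fun a b => F < a ∧ a < G ∧ F < b ∧ b < G ∧ (a ≤ b ∨ b ≤ a)) H K

/-- An incidence complex of rank `n`: a bounded ranked poset (rank function `rk`
with range `{-1,…,n}`, strictly monotone, all flags having `n+2` elements hitting
every rank), strongly connected (I3), and with at least two `i`-faces between any
incident pair of faces of ranks `i-1` and `i+1` (I4). -/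
structure IncComplex (α : Type*) [PartialOrder α] [BoundedOrder α]
    (n : ℤ) (rk : α → ℤ) : Prop where
  rk_bot : rk (⊥ : α) = -1
  rk_top : rk (⊤ : α) = n
  rk_strictMono : ∀ a b : α, a < b → rk a < rk b
  chain_flag : ∀ c : Set α, IsChain (· ≤ ·) c →
    ∃ Φ : Set α, c ⊆ Φ ∧ IsFlagOf Set.univ Φ ∧ Φ.ncard = (n + 2).toNat
  flag_rk : ∀ Φ : Set α, IsFlagOf Set.univ Φ →
    ∀ i ∈ Set.Icc (-1 : ℤ) n, ∃ a ∈ Φ, rk a = i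
  strong_conn : ∀ F G : α, F ≤ G → 2 ≤ rk G - rk F - 1 → ConnIn F G
  two_between : ∀ F G : α, F < G → rk G = rk F + 2 →
    ∃ H H' : α, H ≠ H' ∧ F < H ∧ H < G ∧ F < H' ∧ H' < G

/-- A complex is regular if its automorphism group acts transitively on flags. -/
def IsRegularIC (α : Type*) [PartialOrder α] : Prop :=
  ∀ Φ Ψ : Set α, IsFlagOf Set.univ Φ → IsFlagOf Set.univ Ψ →
    ∃ g : α ≃o α, ⇑g '' Φ = Ψ

/-- `Γ` is a flag-transitive subgroup of the automorphism group. -/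
def FlagTrans {α : Type*} [PartialOrder α] (Γ : Subgroup (α ≃o α)) : Prop :=
  ∀ Φ Ψ : Set α, IsFlagOf Set.univ Φ → IsFlagOf Set.univ Ψ →
    ∃ g ∈ Γ, ⇑g '' Φ = Ψ

/-- The distinguished generating subset `R_i`: the stabilizer in `Γ` of
`Φ \ {F_i}`, where `F` enumerates the base flag by rank. -/
def Rset {α : Type*} [PartialOrder α] (Γ : Subgroup (α ≃o α)) (F : ℤ → α)
    (n i : ℤ) : Set (α ≃o α) :=
  {g | g ∈ Γ ∧ ∀ j ∈ Set.Icc (-1 : ℤ) n, j ≠ i → g (F j) = F j}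

/-! Strong connectedness makes the flags of `K` connected under adjacency. By induction on the
rank gap of a section `G/E`, two flags through `E` and `G` that agree outside `G/E` are joined by
walking along a path of incident faces inside the section, gluing flags at each common face.
If a flag `Ψ` is adjacent to the base flag `Φ`, differing in the face of rank `i`, an element of
`Γ` mapping `Φ` to `Ψ` preserves ranks and so fixes every other face of `Φ`: it lies in `R_i`, and
`0 ≤ i ≤ n - 1` because `⊥` and `⊤` lie on every flag. Following a flag path from `Φ` to `gΦ` and
pulling each step back to `Φ` writes `g = h u` with `h ∈ ⟨R_0, …, R_{n-1}⟩` and `u` in the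
stabiliser of `Φ`, which is contained in `R_0`. -/

section Agree

variable {α : Type*}

def AgreeOutside (rk : α → ℤ) (i j : ℤ) (Φ Ψ : Set α) : Prop :=
  ∀ x, (rk x ≤ i ∨ j ≤ rk x) → (x ∈ Φ ↔ x ∈ Ψ)

theorem AgreeOutside.symm {rk : α → ℤ} {i j : ℤ} {Φ Ψ : Set α}
    (h : AgreeOutside rk i j Φ Ψ) : AgreeOutside rk i j Ψ Φ :=
  fun x hx => (h x hx).symm

theorem AgreeOutside.trans {rk : α → ℤ} {i j : ℤ} {Φ Ψ Θ : Set α}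
    (h : AgreeOutside rk i j Φ Ψ) (h' : AgreeOutside rk i j Ψ Θ) : AgreeOutside rk i j Φ Θ :=
  fun x hx => (h x hx).trans (h' x hx)

end Agree

section Flags

variable {α : Type*} [PartialOrder α]

theorem IsFlagOf.bot_mem [OrderBot α] {Φ : Set α} (hΦ : IsFlagOf univ Φ) : ⊥ ∈ Φ := by
  rw [← hΦ.2.2 _ (subset_univ _) (hΦ.2.1.insert fun _ _ _ => Or.inl bot_le) (subset_insert _ _)]
  exact mem_insert _ _

theorem IsFlagOf.top_mem [OrderTop α] {Φ : Set α} (hΦ : IsFlagOf univ Φ) : ⊤ ∈ Φ := by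
  rw [← hΦ.2.2 _ (subset_univ _) (hΦ.2.1.insert fun _ _ _ => Or.inr le_top) (subset_insert _ _)]
  exact mem_insert _ _

theorem IsFlagOf.image {Φ : Set α} (hΦ : IsFlagOf univ Φ) (g : α ≃o α) :
    IsFlagOf univ (g '' Φ) := by
  refine ⟨subset_univ _, hΦ.2.1.image g, fun Ψ _ hΨ hsub => ?_⟩
  have hsub' : Φ ⊆ g.symm '' Ψ := by
    simpa only [g.symm_image_image] using image_mono (f := g.symm) hsub
  rw [← hΦ.2.2 _ (subset_univ _) (hΨ.image g.symm) hsub', g.image_symm_image]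

theorem IsFlagOf.eq_or_flagAdj {Φ Ψ : Set α} (hΦ : IsFlagOf univ Φ) (hΨ : IsFlagOf univ Ψ)
    (hΦΨ : (Φ \ Ψ).Subsingleton) (hΨΦ : (Ψ \ Φ).Subsingleton) : Φ = Ψ ∨ FlagAdj Φ Ψ := by
  rcases (Φ \ Ψ).eq_empty_or_nonempty with h | ⟨a, ha⟩
  · exact Or.inl (hΦ.2.2 Ψ (subset_univ _) hΨ.2.1 (sdiff_eq_empty.1 h)).symm
  rcases (Ψ \ Φ).eq_empty_or_nonempty with h | ⟨b, hb⟩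
  · exact Or.inl (hΨ.2.2 Φ (subset_univ _) hΦ.2.1 (sdiff_eq_empty.1 h))
  exact Or.inr ⟨by rw [hΦΨ.eq_singleton_of_mem ha, ncard_singleton],
    by rw [hΨΦ.eq_singleton_of_mem hb, ncard_singleton]⟩

theorem FlagAdj.image {β : Type*} [PartialOrder β] {Φ Ψ : Set α} (h : FlagAdj Φ Ψ)
    {f : α → β} (hf : Function.Injective f) : FlagAdj (f '' Φ) (f '' Ψ) := by
  rw [FlagAdj, ← image_sdiff hf, ← image_sdiff hf, ncard_image_of_injective _ hf,
    ncard_image_of_injective _ hf]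
  exact h

def FlagPath : Set α → Set α → Prop :=
  Relation.ReflTransGen fun A B => IsFlagOf univ A ∧ IsFlagOf univ B ∧ FlagAdj A B

def SectionFlagConn (rk : α → ℤ) (E G : α) : Prop :=
  ∀ Φ Ψ : Set α, IsFlagOf univ Φ → IsFlagOf univ Ψ → E ∈ Φ → G ∈ Φ →
    AgreeOutside rk (rk E) (rk G) Φ Ψ → FlagPath Φ Ψ

end Flags

namespace IncComplex

variable {α : Type*} [PartialOrder α] [BoundedOrder α] {n : ℤ} {rk : α → ℤ}

theorem strictMono (hK : IncComplex α n rk) : StrictMono rk :=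
  fun a b h => hK.rk_strictMono a b h

theorem rk_mem_Icc (hK : IncComplex α n rk) (a : α) : rk a ∈ Icc (-1) n :=
  ⟨hK.rk_bot ▸ hK.strictMono.monotone bot_le, hK.rk_top ▸ hK.strictMono.monotone le_top⟩

theorem eq_bot_of_rk_le (hK : IncComplex α n rk) {a : α} (h : rk a ≤ rk ⊥) : a = ⊥ :=
  not_bot_lt_iff.1 fun hlt => (hK.strictMono hlt).not_ge h

theorem eq_top_of_rk_le (hK : IncComplex α n rk) {a : α} (h : rk ⊤ ≤ rk a) : a = ⊤ :=
  not_lt_top_iff.1 fun hlt => (hK.strictMono hlt).not_ge h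

theorem lt_of_rk_lt (hK : IncComplex α n rk) {C : Set α} (hC : IsChain (· ≤ ·) C) {x y : α}
    (hx : x ∈ C) (hy : y ∈ C) (h : rk x < rk y) : x < y := by
  rcases hC.total hx hy with hxy | hyx
  · exact hxy.lt_of_ne fun hxy => (hxy ▸ h).false
  · exact absurd (hK.strictMono.monotone hyx) h.not_ge

theorem eq_of_rk_eq (hK : IncComplex α n rk) {C : Set α} (hC : IsChain (· ≤ ·) C) {x y : α}
    (hx : x ∈ C) (hy : y ∈ C) (h : rk x = rk y) : x = y := by
  rcases hC.total hx hy with hxy | hyx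
  · exact hxy.eq_of_not_lt fun hlt => (hK.strictMono hlt).ne h
  · exact (hyx.eq_of_not_lt fun hlt => (hK.strictMono hlt).ne h.symm).symm

theorem le_of_rk_le (hK : IncComplex α n rk) {C : Set α} (hC : IsChain (· ≤ ·) C) {x y : α}
    (hx : x ∈ C) (hy : y ∈ C) (h : rk x ≤ rk y) : x ≤ y :=
  h.lt_or_eq.elim (fun h => (hK.lt_of_rk_lt hC hx hy h).le)
    fun h => (hK.eq_of_rk_eq hC hx hy h).le

theorem exists_flag_superset (hK : IncComplex α n rk) {C : Set α} (hC : IsChain (· ≤ ·) C) :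
    ∃ Φ, C ⊆ Φ ∧ IsFlagOf univ Φ :=
  let ⟨Φ, hCΦ, hΦ, _⟩ := hK.chain_flag C hC
  ⟨Φ, hCΦ, hΦ⟩

theorem isFlagOf_of_forall_rk (hK : IncComplex α n rk) {C : Set α} (hC : IsChain (· ≤ ·) C)
    (h : ∀ i ∈ Icc (-1) n, ∃ x ∈ C, rk x = i) : IsFlagOf univ C := by
  obtain ⟨Φ, hCΦ, hΦ⟩ := hK.exists_flag_superset hC
  suffices Φ ⊆ C by rwa [hCΦ.antisymm this]
  intro a ha
  obtain ⟨x, hx, hxa⟩ := h (rk a) (hK.rk_mem_Icc a)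
  rwa [← hK.eq_of_rk_eq hΦ.2.1 (hCΦ hx) ha hxa]

theorem rk_le_rk_apply (hK : IncComplex α n rk) (g : α ≃o α) (a : α) : rk a ≤ rk (g a) := by
  obtain ⟨k, hk⟩ : ∃ k : ℕ, rk a = k - 1 :=
    ⟨(rk a + 1).toNat, by have := (hK.rk_mem_Icc a).1; omega⟩
  induction k generalizing a with
  | zero => have := (hK.rk_mem_Icc (g a)).1; omega
  | succ k ih =>
    obtain ⟨Φ, haΦ, hΦ⟩ := hK.exists_flag_superset (IsChain.singleton (a := a))
    obtain ⟨b, hb, hbrk⟩ := hK.flag_rk Φ hΦ (rk a - 1)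
      ⟨by omega, by have := (hK.rk_mem_Icc a).2; omega⟩
    have hba : rk (g b) < rk (g a) :=
      hK.strictMono (g.lt_iff_lt.2 (hK.lt_of_rk_lt hΦ.2.1 hb (haΦ rfl) (by omega)))
    have := ih b (by omega)
    omega

theorem rk_apply (hK : IncComplex α n rk) (g : α ≃o α) (a : α) : rk (g a) = rk a := by
  have := hK.rk_le_rk_apply g.symm (g a)
  rw [g.symm_apply_apply] at this
  exact this.antisymm (hK.rk_le_rk_apply g a)

end IncComplex

namespace IncComplex

variable {α : Type*} [PartialOrder α] [BoundedOrder α] {n : ℤ} {rk : α → ℤ}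

theorem agreeOutside_of_subset (hK : IncComplex α n rk) {Φ Θ : Set α}
    (hΦ : IsFlagOf univ Φ) (hΘ : IsFlagOf univ Θ) {i j : ℤ}
    (h : {x ∈ Φ | rk x ≤ i ∨ j ≤ rk x} ⊆ Θ) : AgreeOutside rk i j Φ Θ := by
  refine fun x hx => ⟨fun hxΦ => h ⟨hxΦ, hx⟩, fun hxΘ => ?_⟩
  obtain ⟨y, hy, hyx⟩ := hK.flag_rk Φ hΦ (rk x) (hK.rk_mem_Icc x)
  rwa [hK.eq_of_rk_eq hΘ.2.1 hxΘ (h ⟨hy, by rwa [hyx]⟩) hyx.symm]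

theorem flagPath_of_agreeOutside_of_le_add_two (hK : IncComplex α n rk) {Φ Ψ : Set α}
    (hΦ : IsFlagOf univ Φ) (hΨ : IsFlagOf univ Ψ) {i j : ℤ} (hij : j ≤ i + 2)
    (h : AgreeOutside rk i j Φ Ψ) : FlagPath Φ Ψ := by
  -- only the rank `i + 1` is free, and a flag has one face of each rank
  have diff_subsingleton : ∀ {A B : Set α}, IsFlagOf univ A → AgreeOutside rk i j A B →
      (A \ B).Subsingleton := by
    rintro A B hA hAB x ⟨hxA, hxB⟩ y ⟨hyA, hyB⟩
    have hx : rk x = i + 1 := by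
      by_contra hx; exact hxB ((hAB x (by omega)).1 hxA)
    have hy : rk y = i + 1 := by
      by_contra hy; exact hyB ((hAB y (by omega)).1 hyA)
    exact hK.eq_of_rk_eq hA.2.1 hxA hyA (hx.trans hy.symm)
  rcases hΦ.eq_or_flagAdj hΨ (diff_subsingleton hΦ h) (diff_subsingleton hΨ h.symm)
    with rfl | hadj
  · exact .refl
  · exact .single ⟨hΦ, hΨ, hadj⟩

theorem isFlagOf_glue (hK : IncComplex α n rk) {Θ Θ' : Set α} (hΘ : IsFlagOf univ Θ)
    (hΘ' : IsFlagOf univ Θ') {b : α} (hb : b ∈ Θ) (hb' : b ∈ Θ') :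
    IsFlagOf univ {x | x ∈ Θ ∧ rk x ≤ rk b ∨ x ∈ Θ' ∧ rk b < rk x} := by
  have below : ∀ x ∈ Θ, rk x ≤ rk b → x ≤ b := fun x hx => hK.le_of_rk_le hΘ.2.1 hx hb
  have above : ∀ y ∈ Θ', rk b < rk y → b ≤ y := fun y hy h => (hK.lt_of_rk_lt hΘ'.2.1 hb' hy h).le
  refine hK.isFlagOf_of_forall_rk ?_ fun i hi => ?_
  · rintro x (⟨hx, hxb⟩ | ⟨hx, hxb⟩) y (⟨hy, hyb⟩ | ⟨hy, hyb⟩) hne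
    · exact hΘ.2.1 hx hy hne
    · exact Or.inl ((below x hx hxb).trans (above y hy hyb))
    · exact Or.inr ((below y hy hyb).trans (above x hx hxb))
    · exact hΘ'.2.1 hx hy hne
  · rcases le_or_gt i (rk b) with h | h
    · obtain ⟨x, hx, rfl⟩ := hK.flag_rk Θ hΘ i hi
      exact ⟨x, Or.inl ⟨hx, h⟩, rfl⟩
    · obtain ⟨x, hx, rfl⟩ := hK.flag_rk Θ' hΘ' i hi
      exact ⟨x, Or.inr ⟨hx, h⟩, rfl⟩

theorem isChain_outside_union (hK : IncComplex α n rk) {Φ : Set α} (hΦ : IsChain (· ≤ ·) Φ)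
    {E G : α} (hE : E ∈ Φ) (hG : G ∈ Φ) {D : Set α} (hD : IsChain (· ≤ ·) D)
    (hDEG : D ⊆ Ioo E G) : IsChain (· ≤ ·) ({x ∈ Φ | rk x ≤ rk E ∨ rk G ≤ rk x} ∪ D) := by
  refine isChain_union.2 ⟨hΦ.mono (sep_subset _ _), hD, ?_⟩
  rintro x ⟨hx, hxE | hGx⟩ y hy -
  · exact Or.inl ((hK.le_of_rk_le hΦ hx hE hxE).trans (hDEG hy).1.le)
  · exact Or.inr ((hDEG hy).2.le.trans (hK.le_of_rk_le hΦ hG hx hGx))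

/-- Two flags through a common face `b` of the section `G/E` are joined by gluing them at `b`:
the glued flag agrees with the first outside `G/b` and with the second outside `b/E`. -/
theorem flagPath_of_mem_of_mem (hK : IncComplex α n rk) {E b G : α}
    (hEb : SectionFlagConn rk E b) (hbG : SectionFlagConn rk b G) {Θ Θ' : Set α}
    (hΘ : IsFlagOf univ Θ) (hΘ' : IsFlagOf univ Θ') (hE : E ∈ Θ) (hG : G ∈ Θ) (hb : b ∈ Θ)
    (hb' : b ∈ Θ') (h : AgreeOutside rk (rk E) (rk G) Θ Θ') : FlagPath Θ Θ' := by
  set Λ := {x | x ∈ Θ ∧ rk x ≤ rk b ∨ x ∈ Θ' ∧ rk b < rk x}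
  have hΛ : IsFlagOf univ Λ := hK.isFlagOf_glue hΘ hΘ' hb hb'
  have hEΛ : E ∈ Λ := (le_or_gt (rk E) (rk b)).elim (fun hEb => Or.inl ⟨hE, hEb⟩)
    fun hbE => Or.inr ⟨(h E (Or.inl le_rfl)).1 hE, hbE⟩
  have hΘΛ : AgreeOutside rk (rk b) (rk G) Θ Λ := by
    intro x hx
    rcases le_or_gt (rk x) (rk b) with hxb | hbx
    · simp [Λ, hxb, not_lt.2 hxb]
    · simp [Λ, hbx, not_le.2 hbx, h x (Or.inr (hx.resolve_left hbx.not_ge))]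
  have hΛΘ' : AgreeOutside rk (rk E) (rk b) Λ Θ' := by
    intro x hx
    rcases le_or_gt (rk x) (rk b) with hxb | hbx
    · have hΘΘ' : x ∈ Θ ↔ x ∈ Θ' := by
        rcases hx with hxE | hbx
        · exact h x (Or.inl hxE)
        · have hxb : rk x = rk b := le_antisymm hxb hbx
          exact ⟨fun hx => hK.eq_of_rk_eq hΘ.2.1 hx hb hxb ▸ hb',
            fun hx => hK.eq_of_rk_eq hΘ'.2.1 hx hb' hxb ▸ hb⟩
      simp [Λ, hxb, not_lt.2 hxb, hΘΘ']
    · simp [Λ, hbx, not_le.2 hbx]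
  exact (hbG Θ Λ hΘ hΛ hb hG hΘΛ).trans (hEb Λ Θ' hΛ hΘ' hEΛ (Or.inl ⟨hb, le_rfl⟩) hΛΘ')

end IncComplex

namespace IncComplex

variable {α : Type*} [PartialOrder α] [BoundedOrder α] {n : ℤ} {rk : α → ℤ}

theorem exists_flagPath_of_sectionPath (hK : IncComplex α n rk) {E G : α}
    (ih : ∀ b, E < b → b < G → SectionFlagConn rk E b ∧ SectionFlagConn rk b G)
    {Φ : Set α} (hΦ : IsFlagOf univ Φ) (hE : E ∈ Φ) (hG : G ∈ Φ) {A H : α} (hA : A ∈ Φ)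
    (hAH : Relation.ReflTransGen
      (fun a b => E < a ∧ a < G ∧ E < b ∧ b < G ∧ (a ≤ b ∨ b ≤ a)) A H) :
    ∃ Θ, IsFlagOf univ Θ ∧ H ∈ Θ ∧ AgreeOutside rk (rk E) (rk G) Φ Θ ∧ FlagPath Φ Θ := by
  induction hAH with
  | refl => exact ⟨Φ, hΦ, hA, fun _ _ => Iff.rfl, .refl⟩
  | @tail b c _ hbc ihbc =>
    obtain ⟨Θ, hΘ, hbΘ, hΦΘ, hΦΘpath⟩ := ihbc
    obtain ⟨hEb, hbG, hEc, hcG, hbc⟩ := hbc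
    have hbcEG : {b, c} ⊆ Ioo E G := by
      rintro x (rfl | rfl)
      exacts [⟨hEb, hbG⟩, ⟨hEc, hcG⟩]
    have hchain : IsChain (· ≤ ·) {b, c} := by
      rcases hbc with hbc | hcb
      exacts [IsChain.pair hbc, pair_comm c b ▸ IsChain.pair hcb]
    obtain ⟨Θ', hsub, hΘ'⟩ :=
      hK.exists_flag_superset (hK.isChain_outside_union hΦ.2.1 hE hG hchain hbcEG)
    have hΦΘ' := hK.agreeOutside_of_subset hΦ hΘ' (subset_union_left.trans hsub)
    refine ⟨Θ', hΘ', hsub (Or.inr (mem_insert_of_mem _ rfl)), hΦΘ', hΦΘpath.trans ?_⟩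
    exact hK.flagPath_of_mem_of_mem (ih b hEb hbG).1 (ih b hEb hbG).2 hΘ hΘ'
      ((hΦΘ E (Or.inl le_rfl)).1 hE) ((hΦΘ G (Or.inr le_rfl)).1 hG) hbΘ
      (hsub (Or.inr (mem_insert _ _))) (hΦΘ.symm.trans hΦΘ')

theorem sectionFlagConn_of_forall_between (hK : IncComplex α n rk) {E G : α}
    (hEG : rk E + 3 ≤ rk G)
    (ih : ∀ b, E < b → b < G → SectionFlagConn rk E b ∧ SectionFlagConn rk b G) :
    SectionFlagConn rk E G := by
  intro Φ Ψ hΦ hΨ hE hG h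
  have hE' : E ∈ Ψ := (h E (Or.inl le_rfl)).1 hE
  have hG' : G ∈ Ψ := (h G (Or.inr le_rfl)).1 hG
  have hrk : rk E + 1 ∈ Icc (-1) n :=
    ⟨by linarith [(hK.rk_mem_Icc E).1], by linarith [(hK.rk_mem_Icc G).2]⟩
  obtain ⟨A, hA, hArk⟩ := hK.flag_rk Φ hΦ _ hrk
  obtain ⟨B, hB, hBrk⟩ := hK.flag_rk Ψ hΨ _ hrk
  have hAB := hK.strong_conn E G (hK.le_of_rk_le hΦ.2.1 hE hG (by omega)) (by omega) A B
    (hK.lt_of_rk_lt hΦ.2.1 hE hA (by omega)) (hK.lt_of_rk_lt hΦ.2.1 hA hG (by omega))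
    (hK.lt_of_rk_lt hΨ.2.1 hE' hB (by omega)) (hK.lt_of_rk_lt hΨ.2.1 hB hG' (by omega))
  obtain ⟨Θ, hΘ, hBΘ, hΦΘ, hΦΘpath⟩ := hK.exists_flagPath_of_sectionPath ih hΦ hE hG hA hAB
  have hEB : E < B := hK.lt_of_rk_lt hΨ.2.1 hE' hB (by omega)
  have hBG : B < G := hK.lt_of_rk_lt hΨ.2.1 hB hG' (by omega)
  exact hΦΘpath.trans (hK.flagPath_of_mem_of_mem (ih B hEB hBG).1 (ih B hEB hBG).2 hΘ hΨ
    ((hΦΘ E (Or.inl le_rfl)).1 hE) ((hΦΘ G (Or.inr le_rfl)).1 hG) hBΘ hB (hΦΘ.symm.trans h))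

theorem sectionFlagConn (hK : IncComplex α n rk) (E G : α) : SectionFlagConn rk E G := by
  suffices ∀ k : ℕ, ∀ E G : α, (rk G - rk E).toNat = k → SectionFlagConn rk E G from
    this _ E G rfl
  intro k
  induction k using Nat.strong_induction_on with
  | _ k ih =>
    intro E G hk
    rcases le_or_gt (rk G) (rk E + 2) with hEG | hEG
    · exact fun Φ Ψ hΦ hΨ _ _ => hK.flagPath_of_agreeOutside_of_le_add_two hΦ hΨ hEG
    refine hK.sectionFlagConn_of_forall_between (by omega) fun b hEb hbG => ?_
    have := hK.strictMono hEb
    have := hK.strictMono hbG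
    exact ⟨ih _ (by omega) E b rfl, ih _ (by omega) b G rfl⟩

theorem flagConnIn_univ (hK : IncComplex α n rk) : FlagConnIn (univ : Set α) := by
  intro Φ Ψ hΦ hΨ
  refine hK.sectionFlagConn ⊥ ⊤ Φ Ψ hΦ hΨ hΦ.bot_mem hΦ.top_mem fun x hx => ?_
  rcases hx with hx | hx
  · simp only [hK.eq_bot_of_rk_le hx, hΦ.bot_mem, hΨ.bot_mem]
  · simp only [hK.eq_top_of_rk_le hx, hΦ.top_mem, hΨ.top_mem]

end IncComplex

namespace IncComplex

variable {α : Type*} [PartialOrder α] [BoundedOrder α] {n : ℤ} {rk : α → ℤ}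

theorem rk_mem_Icc_of_not_mem (hK : IncComplex α n rk) {Ψ : Set α} (hΨ : IsFlagOf univ Ψ)
    {c : α} (hc : c ∉ Ψ) : rk c ∈ Icc 0 (n - 1) := by
  have hbot : ¬ rk c ≤ rk ⊥ := fun h => hc (hK.eq_bot_of_rk_le h ▸ hΨ.bot_mem)
  have htop : ¬ rk ⊤ ≤ rk c := fun h => hc (hK.eq_top_of_rk_le h ▸ hΨ.top_mem)
  rw [hK.rk_bot] at hbot
  rw [hK.rk_top] at htop
  constructor <;> omega

theorem mem_Rset_of_forall_mem_image (hK : IncComplex α n rk) {Γ : Subgroup (α ≃o α)}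
    {F : ℤ → α} (hFrk : ∀ i ∈ Icc (-1 : ℤ) n, rk (F i) = i) {t : α ≃o α} (ht : t ∈ Γ) {i : ℤ}
    (h : ∀ j ∈ Icc (-1 : ℤ) n, j ≠ i → F j ∈ t '' (F '' Icc (-1 : ℤ) n)) :
    t ∈ Rset Γ F n i := by
  refine ⟨ht, fun j hj hji => ?_⟩
  obtain ⟨_, ⟨k, hk, rfl⟩, hkj⟩ := h j hj hji
  obtain rfl : k = j := by rw [← hFrk k hk, ← hFrk j hj, ← hkj, hK.rk_apply]
  exact hkj

theorem exists_mem_Rset_image_eq_of_flagAdj (hK : IncComplex α n rk)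
    {Γ : Subgroup (α ≃o α)} (hΓ : FlagTrans Γ) {F : ℤ → α}
    (hFflag : IsFlagOf univ (F '' Icc (-1 : ℤ) n)) (hFrk : ∀ i ∈ Icc (-1 : ℤ) n, rk (F i) = i)
    {Ψ : Set α} (hΨ : IsFlagOf univ Ψ) (hadj : FlagAdj (F '' Icc (-1 : ℤ) n) Ψ) :
    ∃ t ∈ ⋃ i ∈ Icc (0 : ℤ) (n - 1), Rset Γ F n i, t '' (F '' Icc (-1 : ℤ) n) = Ψ := by
  obtain ⟨c, hc⟩ := ncard_eq_one.1 hadj.1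
  have hcΨ : c ∉ Ψ := (hc.symm ▸ mem_singleton c : c ∈ _ \ Ψ).2
  obtain ⟨t, ht, rfl⟩ := hΓ _ _ hFflag hΨ
  refine ⟨t, mem_biUnion (hK.rk_mem_Icc_of_not_mem hΨ hcΨ)
    (hK.mem_Rset_of_forall_mem_image hFrk ht fun j hj hjc => ?_), rfl⟩
  by_contra hj'
  have hFj : F j ∈ F '' Icc (-1 : ℤ) n \ t '' (F '' Icc (-1 : ℤ) n) :=
    ⟨mem_image_of_mem F hj, hj'⟩
  rw [hc, mem_singleton_iff] at hFj
  exact hjc (by rw [← hFrk j hj, hFj])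

theorem exists_mem_closure_image_eq_of_flagPath (hK : IncComplex α n rk)
    {Γ : Subgroup (α ≃o α)} (hΓ : FlagTrans Γ) {F : ℤ → α}
    (hFflag : IsFlagOf univ (F '' Icc (-1 : ℤ) n)) (hFrk : ∀ i ∈ Icc (-1 : ℤ) n, rk (F i) = i)
    {Ψ : Set α} (hΨ : FlagPath (F '' Icc (-1 : ℤ) n) Ψ) :
    ∃ h ∈ Subgroup.closure (⋃ i ∈ Icc (0 : ℤ) (n - 1), Rset Γ F n i),
      h '' (F '' Icc (-1 : ℤ) n) = Ψ := by
  induction hΨ with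
  | refl => exact ⟨1, one_mem _, image_id _⟩
  | tail _ hstep ih =>
    obtain ⟨h, hS, rfl⟩ := ih
    obtain ⟨-, hΨ, hadj⟩ := hstep
    obtain ⟨t, ht, hteq⟩ := hK.exists_mem_Rset_image_eq_of_flagAdj hΓ hFflag hFrk
      (hΨ.image h.symm) (by simpa only [h.symm_image_image] using hadj.image h.symm.injective)
    refine ⟨h * t, mul_mem hS (Subgroup.subset_closure ht), ?_⟩
    rw [RelIso.coe_mul, image_comp, hteq, h.image_symm_image]

end IncComplex

/-- a flag-transitive subgroup is generated by `R_0, …, R_{n-1}`. -/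
theorem generated_by_distinguished_subgroups
    {α : Type*} [PartialOrder α] [BoundedOrder α] (n : ℤ) (rk : α → ℤ)
    (hn : 1 ≤ n) (hK : IncComplex α n rk)
    (Γ : Subgroup (α ≃o α)) (hΓ : FlagTrans Γ)
    (F : ℤ → α) (hFflag : IsFlagOf Set.univ (F '' Set.Icc (-1 : ℤ) n))
    (hFrk : ∀ i ∈ Set.Icc (-1 : ℤ) n, rk (F i) = i)
    :
    Subgroup.closure (⋃ i ∈ Set.Icc (0 : ℤ) (n - 1), Rset Γ F n i) = Γ := by
  have hSΓ : Subgroup.closure (⋃ i ∈ Icc (0 : ℤ) (n - 1), Rset Γ F n i) ≤ Γ :=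
    (Subgroup.closure_le Γ).2 (iUnion₂_subset fun _ _ _ hg => hg.1)
  refine le_antisymm hSΓ fun g hg => ?_
  obtain ⟨h, hS, hh⟩ := hK.exists_mem_closure_image_eq_of_flagPath hΓ hFflag hFrk
    (hK.flagConnIn_univ _ _ hFflag (hFflag.image g))
  -- `h⁻¹ * g` stabilises the base flag, hence lies in `R_0`
  have hu : h⁻¹ * g ∈ Rset Γ F n 0 :=
    hK.mem_Rset_of_forall_mem_image hFrk (mul_mem (inv_mem (hSΓ hS)) hg) fun j hj _ => by
      rw [RelIso.coe_mul, image_comp, ← hh]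
      exact (h.symm_image_image _).symm ▸ mem_image_of_mem F hj
  simpa using mul_mem hS (Subgroup.subset_closure (mem_biUnion ⟨le_rfl, by omega⟩ hu))
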